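/- The Cauchy–Binet theorem for the permanent: For all m×m complex matrices A and B and all p, q ∈ ℕ^m, Per((AB)_{p,q}) = Σ_{k ∈ ℕ^m, |k| = |p|} (1/k!) · Per(A_{p,k}) · Per(B_{k,q}). -/

import Mathlib

/-!
Write `(AB)_{p,q} = A_{p,·} B_{·,q}` and expand the permanent multilinearly in the rows:
`Per((AB)_{p,q}) = ∑_f (∏_r A_{ρ r, f r}) Per(B_{f,q})`, the sum over all maps `f` from the `|p|`
rows to `{1, …, m}`, where `ρ r` is the row of `A` that row `r` of `A_{p,·}` copies. Group the maps
by their fibre sizes `k`. The factor `Per(B_{f,q}) = Per(B_{k,q})` is constant on a class, and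
since `σ ↦ g ∘ σ` covers the class `k!`-to-one, the first factor sums over it to
`Per(A_{p,k}) / k!`.
-/

open BigOperators Matrix

/-- The list of row indices of `A_{p,·}`: each index `i` repeated `p i` times, in order. -/
def repList {m : ℕ} (p : Fin m → ℕ) : List (Fin m) :=
  (List.finRange m).flatMap fun i => List.replicate (p i) i

lemma repList_length {m : ℕ} (p : Fin m → ℕ) : (repList p).length = ∑ i, p i := by
  simp only [repList, List.length_flatMap, Fin.sum_univ_def]
  congr 1
  apply List.map_congr_left
  intro i _
  simp

/-- The matrix `A_{p,q}`: row `i` repeated `p i` times, column `j` repeated `q j` times. -/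
def repMat {m : ℕ} (A : Matrix (Fin m) (Fin m) ℂ) (p q : Fin m → ℕ) :
    Matrix (Fin (∑ i, p i)) (Fin (∑ j, q j)) ℂ :=
  Matrix.of fun r c =>
    A ((repList p).get (Fin.cast (repList_length p).symm r))
      ((repList q).get (Fin.cast (repList_length q).symm c))

/-- `Per(A_{p,q})`; by convention `0` when the matrix is not square. -/
noncomputable def perRep {m : ℕ} (A : Matrix (Fin m) (Fin m) ℂ) (p q : Fin m → ℕ) : ℂ :=
  if h : (∑ i, p i) = (∑ j, q j) then
    (Matrix.of fun r c : Fin (∑ i, p i) => repMat A p q r (Fin.cast h c)).permanent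
  else 0

open Finset Equiv
open scoped Nat

section FiberCard

variable {α β ι : Type*} [Fintype α] [DecidableEq ι]

def fiberCard (f : α → ι) (i : ι) : ℕ := #{a | f a = i}

lemma fiberCard_eq_count {n : ℕ} (f : Fin n → ι) (i : ι) :
    fiberCard f i = (List.ofFn f).count i := by
  rw [← Multiset.coe_count, ← Fin.univ_val_map, Multiset.count_map]
  simp [fiberCard, Finset.card, Finset.filter, eq_comm]

lemma sum_fiberCard [Fintype ι] (f : α → ι) : ∑ i, fiberCard f i = Fintype.card α :=
  (card_eq_sum_card_fiberwise fun a _ => mem_univ (f a)).symm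

lemma fiberCard_comp_equiv [Fintype β] (f : α → ι) (e : β ≃ α) :
    fiberCard (f ∘ e) = fiberCard f := by
  funext i
  simp only [fiberCard, ← Fintype.card_subtype]
  exact Fintype.card_congr (e.subtypeEquiv fun _ => Iff.rfl)

lemma exists_perm_comp_eq_of_fiberCard_eq {f g : α → ι} (h : fiberCard f = fiberCard g) :
    ∃ σ : Perm α, g ∘ σ = f :=
  ⟨ofFiberEquiv (f := f) (g := g) fun i => Fintype.equivOfCardEq <| by
      simpa only [fiberCard, Fintype.card_subtype] using congrFun h i,
    funext (ofFiberEquiv_map _)⟩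

variable [DecidableEq α] [Fintype ι]

lemma card_perm_comp_eq_of_fiberCard_eq {f g : α → ι} (h : fiberCard f = fiberCard g) :
    #{σ : Perm α | g ∘ σ = f} = ∏ i, (fiberCard g i)! := by
  obtain ⟨τ, rfl⟩ := exists_perm_comp_eq_of_fiberCard_eq h
  have hstab : ∀ σ : Perm α, g ∘ σ = g ∘ τ ↔ g ∘ (Equiv.mulRight τ⁻¹ σ) = g := fun σ => by
    constructor <;> intro hσ <;> funext a
    · simpa using congrFun hσ (τ⁻¹ a)
    · simpa using congrFun hσ (τ a)
  rw [← Fintype.card_subtype,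
    Fintype.card_congr
      (subtypeEquiv (q := fun σ : Perm α => g ∘ σ = g) (Equiv.mulRight τ⁻¹) hstab),
    DomMulAct.stabilizer_card]
  simp only [fiberCard, Fintype.card_subtype]

lemma sum_perm_comp {M : Type*} [AddCommMonoid M] (G : (α → ι) → M) (g : α → ι) :
    ∑ σ : Perm α, G (g ∘ σ) =
      (∏ i, (fiberCard g i)!) • ∑ f with fiberCard f = fiberCard g, G f := by
  have himage :
      univ.image (fun σ : Perm α => g ∘ σ) = univ.filter fun f => fiberCard f = fiberCard g := by
    ext f
    simp only [mem_image, mem_univ, true_and, mem_filter]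
    constructor
    · rintro ⟨σ, rfl⟩
      exact fiberCard_comp_equiv g σ
    · exact exists_perm_comp_eq_of_fiberCard_eq
  rw [Finset.sum_comp, himage, smul_sum]
  refine sum_congr rfl fun f hf => ?_
  rw [card_perm_comp_eq_of_fiberCard_eq (mem_filter.mp hf).2]

end FiberCard

section Permanent

variable {n ι R : Type*} [Fintype n] [DecidableEq n] [CommSemiring R]

lemma permanent_eq_sum_prod_perm_apply (M : Matrix n n R) :
    M.permanent = ∑ σ : Perm n, ∏ i, M i (σ i) := by
  rw [← permanent_transpose]
  rfl

lemma permanent_submatrix_perm (M : Matrix n n R) (σ τ : Perm n) :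
    (M.submatrix σ τ).permanent = M.permanent :=
  calc (M.submatrix σ τ).permanent = ((M.submatrix σ id).submatrix id τ).permanent := rfl
    _ = M.permanent := by rw [permanent_permute_rows, permanent_permute_cols]

lemma permanent_mul [Fintype ι] [DecidableEq ι] (X : Matrix n ι R) (Y : Matrix ι n R) :
    (X * Y).permanent = ∑ f : n → ι, (∏ i, X i (f i)) * (Y.submatrix f id).permanent := by
  simp only [permanent_eq_sum_prod_perm_apply, mul_apply, Fintype.prod_sum, mul_sum]
  rw [sum_comm]
  refine sum_congr rfl fun f _ => sum_congr rfl fun σ _ => ?_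
  rw [← prod_mul_distrib]
  rfl

end Permanent

section RepIndex

variable {m : ℕ}

def repIndex (p : Fin m → ℕ) : Fin (∑ i, p i) → Fin m :=
  fun r => (repList p).get (Fin.cast (repList_length p).symm r)

lemma count_repList (p : Fin m → ℕ) (i : Fin m) : (repList p).count i = p i := by
  simp only [repList, List.count_flatMap, Function.comp_def, List.count_replicate]
  rw [← Fin.sum_univ_def]
  simp

lemma fiberCard_repIndex (p : Fin m → ℕ) : fiberCard (repIndex p) = p := by
  funext i
  rw [fiberCard_eq_count, ← count_repList p i,
    ← List.ofFn_get (repList p), List.ofFn_congr (repList_length p)]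
  rfl

lemma exists_fiberCard_eq {N : ℕ} {k : Fin m → ℕ} (hk : ∑ i, k i = N) :
    ∃ g : Fin N → Fin m, fiberCard g = k :=
  ⟨repIndex k ∘ finCongr hk.symm, by rw [fiberCard_comp_equiv, fiberCard_repIndex]⟩

lemma perRep_eq_permanent_submatrix {N : ℕ} {A : Matrix (Fin m) (Fin m) ℂ} {p q : Fin m → ℕ}
    {r c : Fin N → Fin m} (hr : fiberCard r = p) (hc : fiberCard c = q) :
    perRep A p q = (A.submatrix r c).permanent := by
  have hp : ∑ i, p i = N := by rw [← hr, sum_fiberCard, Fintype.card_fin]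
  have hq : ∑ i, q i = N := by rw [← hc, sum_fiberCard, Fintype.card_fin]
  subst hp
  rw [perRep, dif_pos hq.symm]
  obtain ⟨σ, rfl⟩ := exists_perm_comp_eq_of_fiberCard_eq (hr.trans (fiberCard_repIndex p).symm)
  obtain ⟨τ, rfl⟩ := exists_perm_comp_eq_of_fiberCard_eq (g := repIndex q ∘ finCongr hq.symm)
    (by rw [hc, fiberCard_comp_equiv, fiberCard_repIndex])
  rw [← submatrix_submatrix, permanent_submatrix_perm]
  rfl

lemma perRep_mul_perRep {N : ℕ} (A B : Matrix (Fin m) (Fin m) ℂ) {p q k : Fin m → ℕ}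
    {r c : Fin N → Fin m} (hr : fiberCard r = p) (hc : fiberCard c = q) (hk : ∑ i, k i = N) :
    perRep A p k * perRep B k q = (∏ i, ((k i)! : ℂ)) *
      ∑ f with fiberCard f = k, (∏ i, A (r i) (f i)) * (B.submatrix f c).permanent := by
  obtain ⟨g, hg⟩ := exists_fiberCard_eq hk
  have hB : ∀ σ : Perm (Fin N),
      (B.submatrix g c).permanent = (B.submatrix (g ∘ σ) c).permanent := fun σ => by
    rw [← permanent_permute_cols σ, submatrix_submatrix]
    rfl
  calc perRep A p k * perRep B k q
      = ∑ σ : Perm (Fin N), (∏ i, A (r i) ((g ∘ σ) i)) * (B.submatrix (g ∘ σ) c).permanent := by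
        rw [perRep_eq_permanent_submatrix hr hg, perRep_eq_permanent_submatrix hg hc,
          permanent_eq_sum_prod_perm_apply, sum_mul]
        refine sum_congr rfl fun σ _ => ?_
        rw [hB σ]
        rfl
    _ = _ := by
        rw [sum_perm_comp (fun f => (∏ i, A (r i) (f i)) * (B.submatrix f c).permanent) g, hg,
          nsmul_eq_mul]
        push_cast
        rfl

end RepIndex

/-- **The Cauchy–Binet theorem for the permanent.** -/
theorem cauchy_binet_permanent (m : ℕ) (A B : Matrix (Fin m) (Fin m) ℂ) (p q : Fin m → ℕ) :
    perRep (A * B) p q =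
      ∑ k ∈ Finset.Nat.antidiagonalTuple m (∑ i, p i),
        (1 / (∏ i, (Nat.factorial (k i) : ℂ))) * perRep A p k * perRep B k q := by
  by_cases h : ∑ i, p i = ∑ j, q j
  · have hr := fiberCard_repIndex p
    have hc : fiberCard (repIndex q ∘ finCongr h) = q := by
      rw [fiberCard_comp_equiv, fiberCard_repIndex]
    have hmaps : ∀ f : Fin (∑ i, p i) → Fin m,
        fiberCard f ∈ Finset.Nat.antidiagonalTuple m (∑ i, p i) := fun f => by
      rw [Finset.Nat.mem_antidiagonalTuple, sum_fiberCard, Fintype.card_fin]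
    rw [perRep_eq_permanent_submatrix hr hc, submatrix_mul _ _ _ _ _ Function.bijective_id,
      permanent_mul, ← sum_fiberwise_of_maps_to fun f _ => hmaps f]
    simp only [submatrix_submatrix, submatrix_apply, Function.comp_id, Function.id_comp, id]
    refine sum_congr rfl fun k hk => ?_
    have hfact : (∏ i, ((k i)! : ℂ)) ≠ 0 :=
      prod_ne_zero_iff.mpr fun i _ => Nat.cast_ne_zero.mpr (Nat.factorial_ne_zero _)
    rw [mul_assoc, perRep_mul_perRep A B hr hc (Finset.Nat.mem_antidiagonalTuple.mp hk),
      ← mul_assoc, one_div_mul_cancel hfact, one_mul]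
  · rw [perRep, dif_neg h]
    refine (sum_eq_zero fun k hk => ?_).symm
    have hBk : perRep B k q = 0 := dif_neg (by rwa [Finset.Nat.mem_antidiagonalTuple.mp hk])
    rw [hBk, mul_zero]
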